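/- Let d be a nonzero integer with gcd(d,6) = 1 and let Q = (a,b,c) ∈ ℤ³ be an integral binary quadratic form with b² − 4ac = d² and 6 | a. Then the equation Q(x,y) = 0 has exactly two solutions 𝔞₁ ≠ 𝔞₂ in the projective line P¹(ℚ), and there exists γ ∈ Γ₀(6) such that 𝔞₂ = (W₆·γ)·𝔞₁, where W₆ is the matrix [[0,−1],[6,0]] and GL₂(ℚ) acts on P¹(ℚ) by fractional linear transformations. -/

import Mathlib

/-- The value of the binary quadratic form `(a,b,c)` at a vector `v ∈ ℚ²`. -/
def QFval (a b c : ℤ) (v : Fin 2 → ℚ) : ℚ :=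
  a * (v 0) ^ 2 + b * (v 0) * (v 1) + c * (v 1) ^ 2

/-- The matrix `W₆ = [[0,-1],[6,0]]` over `ℚ`. -/
def W6 : Matrix (Fin 2) (Fin 2) ℚ := !![0, -1; 6, 0]

/-!
The argument works at any squarefree level `N` with `N ∣ a` and `gcd(d, N) = 1`.
A form of square discriminant `d²` splits over `ℤ` as `(a₁x + b₁y)(a₂x + b₂y)` with
`a₁b₂ - b₁a₂ = ±d`, so its roots are the cusps `𝔞₁ = [-b₁ : a₁]` and `𝔞₂ = [-b₂ : a₂]`, and
`W_N⁻¹𝔞₂ = [a₂ : N b₂]`. For squarefree `N` the `Γ₀(N)`-orbit of a cusp `[x : y]` in lowest terms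
is determined by `gcd(y, N)`. If `p ∣ N` is prime then `p ∣ a₁a₂` but `p ∤ a₁b₂ - b₁a₂`, so `p`
divides exactly one of `a₁`, `a₂`; and since `p² ∤ N`, `p` divides the reduced second coordinate
of `[a₂ : N b₂]` exactly when `p ∤ a₂`. Hence `𝔞₁` and `W_N⁻¹𝔞₂` have the same invariant.
-/

open Matrix CongruenceSubgroup

theorem exists_coprime_factorization_of_discr_eq_sq {a b c d : ℤ}
    (hdisc : b ^ 2 - 4 * a * c = d ^ 2) :
    ∃ a₁ b₁ a₂ b₂ : ℤ, IsCoprime a₁ b₁ ∧ a = a₁ * a₂ ∧ b = a₁ * b₂ + b₁ * a₂ ∧ c = b₁ * b₂ := by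
  rcases eq_or_ne a 0 with rfl | ha
  · exact ⟨0, 1, b, c, isCoprime_zero_left.2 isUnit_one, by ring, by ring, by ring⟩
  have hprod : (b + d) * (b - d) = 2 * (2 * a * c) := by linear_combination hdisc
  obtain ⟨u, hu⟩ : Even (b + d) := by
    have := Int.even_mul.1 (hprod ▸ even_two_mul _)
    rw [Int.even_sub, ← Int.even_add] at this
    tauto
  obtain ⟨v, rfl⟩ : ∃ v, d = u - v := ⟨u - d, by ring⟩
  have huv : u * v = a * c := by
    have : 4 * (u * v) = 4 * (a * c) := by linear_combination hdisc - (u + v + b) * hu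
    exact mul_left_cancel₀ four_ne_zero this
  obtain ⟨g, a₁, b₁, hg, hcop, rfl, rfl⟩ := Int.exists_gcd_one' (Int.gcd_pos_of_ne_zero_left v ha)
  replace hcop : IsCoprime a₁ b₁ := Int.isCoprime_iff_gcd_eq_one.2 hcop
  have hg0 : (g : ℤ) ≠ 0 := by exact_mod_cast hg.ne'
  have ha₁ : a₁ ≠ 0 := by rintro rfl; simp at ha
  have huv' : u * b₁ = a₁ * c := mul_right_cancel₀ hg0 (by linear_combination huv)
  obtain ⟨b₂, rfl⟩ : a₁ ∣ u := hcop.dvd_of_dvd_mul_right ⟨c, huv'⟩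
  refine ⟨a₁, b₁, g, b₂, hcop, rfl, by linear_combination hu, ?_⟩
  exact mul_left_cancel₀ ha₁ (by linear_combination -huv')

theorem QFval_mul (a₁ b₁ a₂ b₂ : ℤ) (v : Fin 2 → ℚ) :
    QFval (a₁ * a₂) (a₁ * b₂ + b₁ * a₂) (b₁ * b₂) v =
      (a₁ * v 0 + b₁ * v 1) * (a₂ * v 0 + b₂ * v 1) := by
  simp only [QFval]
  push_cast
  ring

namespace Projectivization

variable {K : Type*} [Field K]

theorem linearForm_eq_zero_iff_mk_eq {α β : K} (hαβ : ![-β, α] ≠ 0) {w : Fin 2 → K}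
    (hw : w ≠ 0) : α * w 0 + β * w 1 = 0 ↔ mk K w hw = mk K ![-β, α] hαβ := by
  rw [mk_eq_mk_iff']
  constructor
  · intro h
    rcases eq_or_ne α 0 with rfl | hα
    · have hβ : β ≠ 0 := by rintro rfl; simp at hαβ
      refine ⟨-(w 0 / β), funext (Fin.forall_fin_two.2 ⟨?_, ?_⟩)⟩
      · simp [hβ]
      · simpa [hβ, eq_comm] using h
    · refine ⟨w 1 / α, funext (Fin.forall_fin_two.2 ⟨?_, ?_⟩)⟩
      · rw [Pi.smul_apply, cons_val_zero, smul_eq_mul, div_mul_eq_mul_div, div_eq_iff hα]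
        linear_combination -h
      · simp [hα]
  · rintro ⟨c, rfl⟩
    simp only [Pi.smul_apply, smul_eq_mul, cons_val_zero, cons_val_one]
    ring

theorem mk_mulVec_eq_of_mulVec_eq_smul {n : Type*} [Fintype n] {M : Matrix n n K}
    {u u' v : n → K} {c : K} (hMu : M *ᵥ u = c • u') (hu : u ≠ 0) (hu' : u' ≠ 0) (hv : v ≠ 0)
    (hMv : M *ᵥ v ≠ 0) (h : mk K v hv = mk K u hu) : mk K (M *ᵥ v) hMv = mk K u' hu' := by
  obtain ⟨s, rfl⟩ := (mk_eq_mk_iff' K _ _ hv hu).1 h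
  refine (mk_eq_mk_iff' K _ _ hMv hu').2 ⟨s * c, ?_⟩
  rw [mulVec_smul, hMu, smul_smul]

end Projectivization

namespace Int

theorem exists_dvd_sub_mul_of_gcd_dvd {m r : ℤ} {N : ℕ} (h : (gcd m N : ℤ) ∣ r) :
    ∃ t : ℤ, (N : ℤ) ∣ r - t * m := by
  obtain ⟨k, rfl⟩ := h
  exact ⟨m.gcdA N * k, m.gcdB N * k, by rw [gcd_eq_gcd_ab]; ring⟩

theorem gcd_mul_dvd_mul_gcd (k m n : ℤ) : gcd k (m * n) ∣ gcd k m * gcd k n := by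
  simp only [gcd, natAbs_mul]
  exact _root_.gcd_mul_dvd_mul_gcd k.natAbs m.natAbs n.natAbs

theorem gcd_eq_gcd_of_prime_dvd_iff {N : ℕ} (hN : Squarefree N) {y Y : ℤ}
    (h : ∀ p : ℕ, p.Prime → p ∣ N → ((p : ℤ) ∣ y ↔ (p : ℤ) ∣ Y)) :
    gcd y N = gcd Y N := by
  have hsq : ∀ z : ℤ, Squarefree (gcd z N) := fun z =>
    hN.squarefree_of_dvd (natCast_dvd_natCast.1 (gcd_dvd_right z N))
  refine (Nat.Squarefree.ext_iff (hsq y) (hsq Y)).2 fun p hp => ?_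
  have hdvd : ∀ z : ℤ, p ∣ gcd z N ↔ (p : ℤ) ∣ z ∧ p ∣ N := fun z => by
    show p ∣ Nat.gcd z.natAbs N ↔ _
    rw [Nat.dvd_gcd_iff, natCast_dvd]
  rw [hdvd, hdvd]
  exact and_congr_left (h p hp)

theorem prime_dvd_iff_not_dvd_of_primitive {p n a b X Y : ℤ} {g : ℕ} (hp : Prime p)
    (hpn : p ∣ n) (hppn : ¬ p * p ∣ n) (hab : ¬ (p ∣ a ∧ p ∣ b)) (hX : a = X * g)
    (hY : n * b = Y * g) (hXY : IsCoprime X Y) : p ∣ Y ↔ ¬ p ∣ a := by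
  constructor
  · intro hpY hpa
    have hpX : ¬ p ∣ X := fun hpX => hp.not_isUnit (hXY.isUnit_of_dvd' hpX hpY)
    have hpg : p ∣ (g : ℤ) := (hp.dvd_or_dvd (hX ▸ hpa)).resolve_left hpX
    have hpb : IsCoprime p b := (Prime.coprime_iff_not_dvd hp).2 fun hpb => hab ⟨hpa, hpb⟩
    exact hppn ((hpb.mul_left hpb).dvd_of_dvd_mul_right (hY ▸ mul_dvd_mul hpY hpg))
  · intro hpa
    have hpg : ¬ p ∣ (g : ℤ) := fun hpg => hpa (hX ▸ hpg.mul_left X)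
    exact (hp.dvd_or_dvd (hY ▸ hpn.mul_right b)).resolve_right hpg

end Int

theorem exists_mem_Gamma0_mulVec_eq {N : ℕ} (hN : Squarefree N) {x y X Y : ℤ}
    (hxy : IsCoprime x y) (hXY : IsCoprime X Y) (hgcd : Int.gcd y N = Int.gcd Y N) :
    ∃ γ ∈ Gamma0 N, (γ : Matrix (Fin 2) (Fin 2) ℤ) *ᵥ ![x, y] = ![X, Y] := by
  obtain ⟨z, u, hzu⟩ := hxy
  obtain ⟨Z, U, hZU⟩ := hXY
  have hsolv : (Int.gcd (Y * y) N : ℤ) ∣ Y * z - Z * y := by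
    have hsq : Squarefree (Int.gcd (Y * y) N) :=
      hN.squarefree_of_dvd (Int.natCast_dvd_natCast.1 (Int.gcd_dvd_right _ _))
    have hdvd : Int.gcd (Y * y) N ∣ Int.gcd y N := by
      rw [← hsq.dvd_pow_iff_dvd two_ne_zero, sq]
      nth_rw 1 [hgcd]
      simpa only [Int.gcd_comm _ (N : ℤ)] using Int.gcd_mul_dvd_mul_gcd N Y y
    refine (Int.natCast_dvd_natCast.2 hdvd).trans (dvd_sub ?_ ?_)
    · exact (hgcd ▸ Int.gcd_dvd_left Y N).mul_right z
    · exact (Int.gcd_dvd_left y N).mul_left Z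
  obtain ⟨t, ht⟩ := Int.exists_dvd_sub_mul_of_gcd_dvd hsolv
  -- `γ = [[X, -U], [Y, Z]] * [[1, t], [0, 1]] * [[z, u], [-y, x]]` maps `(x, y) ↦ (1, 0) ↦ (X, Y)`;
  -- the choice of `t` makes its lower left entry divisible by `N`.
  refine ⟨(⟨!![X * z + U * y - t * X * y, X * u - U * x + t * X * x;
      Y * z - Z * y - t * Y * y, Y * u + Z * x + t * Y * x], ?_⟩ : SpecialLinearGroup (Fin 2) ℤ),
    ?_, ?_⟩
  · rw [det_fin_two_of]
    linear_combination (Z * X + U * Y) * hzu + hZU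
  · refine Gamma0_mem.2 ((ZMod.intCast_zmod_eq_zero_iff_dvd _ _).2 ?_)
    simpa [mul_assoc] using ht
  · simp only [cons_mulVec, vec2_dotProduct', empty_mulVec]
    congr 2
    · linear_combination X * hzu
    · linear_combination Y * hzu

def atkinLehner (N : ℕ) : Matrix (Fin 2) (Fin 2) ℚ := !![0, -1; (N : ℚ), 0]

theorem atkinLehner_mulVec (N : ℕ) (x y : ℚ) : atkinLehner N *ᵥ ![x, y] = ![-y, N * x] := by
  simp only [atkinLehner, cons_mulVec, vec2_dotProduct', empty_mulVec]
  simp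

theorem exists_mem_Gamma0_atkinLehner_mul_mulVec_eq_smul {N : ℕ} (hN : Squarefree N)
    {a₁ b₁ a₂ b₂ : ℤ} (hcop : IsCoprime a₁ b₁) (hδ : IsCoprime (a₁ * b₂ - b₁ * a₂) N)
    (hNa : (N : ℤ) ∣ a₁ * a₂) (h₂ : a₂ ≠ 0 ∨ b₂ ≠ 0) :
    ∃ γ ∈ Gamma0 N, ∃ c : ℚ,
      (atkinLehner N * (γ : Matrix (Fin 2) (Fin 2) ℤ).map (Int.cast : ℤ → ℚ)) *ᵥ ![-(b₁ : ℚ), a₁]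
        = c • ![-(b₂ : ℚ), a₂] := by
  have hN0 : (N : ℤ) ≠ 0 := by exact_mod_cast hN.ne_zero
  -- `(X, Y)` is the primitive vector on the line `W_N⁻¹ 𝔞₂ = [a₂ : N b₂]`
  obtain ⟨g, X, Y, hg, hXY, hX, hY⟩ :=
    Int.exists_gcd_one' (Int.gcd_pos_iff.2 (h₂.imp_right (mul_ne_zero hN0)))
  replace hXY : IsCoprime X Y := Int.isCoprime_iff_gcd_eq_one.2 hXY
  have hgcd : Int.gcd a₁ N = Int.gcd Y N := Int.gcd_eq_gcd_of_prime_dvd_iff hN fun p hp hpN => by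
    have hp' : Prime (p : ℤ) := Nat.prime_iff_prime_int.1 hp
    have hpN' : (p : ℤ) ∣ N := Int.natCast_dvd_natCast.2 hpN
    have hpp : ¬ (p * p : ℤ) ∣ N := fun h =>
      hp.one_lt.ne' (Nat.isUnit_iff.1 (hN p (by exact_mod_cast h)))
    have hpδ : ¬ (p : ℤ) ∣ a₁ * b₂ - b₁ * a₂ := fun h =>
      hp'.not_isUnit (hδ.isUnit_of_dvd' h hpN')
    rw [Int.prime_dvd_iff_not_dvd_of_primitive hp' hpN' hpp
      (fun h => hpδ (dvd_sub (h.2.mul_left a₁) (h.1.mul_left b₁))) hX hY hXY]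
    constructor
    · intro h₁ h₂
      exact hpδ (dvd_sub (h₁.mul_right b₂) (h₂.mul_left b₁))
    · exact (hp'.dvd_or_dvd (hpN'.trans hNa)).resolve_right
  obtain ⟨γ, hγ, hγu⟩ := exists_mem_Gamma0_mulVec_eq hN hcop.symm.neg_left hXY hgcd
  refine ⟨γ, hγ, N / g, ?_⟩
  have hγu' : (γ : Matrix (Fin 2) (Fin 2) ℤ).map (Int.cast : ℤ → ℚ) *ᵥ ![-(b₁ : ℚ), a₁]
      = ![(X : ℚ), Y] := by
    have h := (Int.castRingHom ℚ).map_mulVec (γ : Matrix (Fin 2) (Fin 2) ℤ) ![-b₁, a₁]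
    rw [hγu] at h
    exact funext (Fin.forall_fin_two.2 ⟨by simpa using (h 0).symm, by simpa using (h 1).symm⟩)
  have hg0 : (g : ℚ) ≠ 0 := by exact_mod_cast hg.ne'
  have hXq : (a₂ : ℚ) = X * g := by exact_mod_cast hX
  have hYq : (N : ℚ) * b₂ = Y * g := by exact_mod_cast hY
  rw [← mulVec_mulVec, hγu', atkinLehner_mulVec]
  refine funext (Fin.forall_fin_two.2 ⟨?_, ?_⟩)
  · simp only [cons_val_zero, Pi.smul_apply, smul_eq_mul]
    rw [div_mul_eq_mul_div, eq_div_iff hg0]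
    linear_combination hYq
  · simp only [cons_val_one, cons_val_zero, Pi.smul_apply, smul_eq_mul]
    rw [div_mul_eq_mul_div, eq_div_iff hg0]
    linear_combination -(N : ℚ) * hXq

theorem exists_roots_related_by_atkinLehner {N : ℕ} (hN : Squarefree N) {a b c d : ℤ}
    (hd : d ≠ 0) (hdN : IsCoprime d N) (hdisc : b ^ 2 - 4 * a * c = d ^ 2) (ha : (N : ℤ) ∣ a) :
    ∃ p₁ p₂ : Projectivization ℚ (Fin 2 → ℚ), p₁ ≠ p₂ ∧
      (∀ p : Projectivization ℚ (Fin 2 → ℚ), QFval a b c p.rep = 0 ↔ p = p₁ ∨ p = p₂) ∧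
      ∃ γ ∈ Gamma0 N, ∀ (v : Fin 2 → ℚ) (hv : v ≠ 0)
        (hw : (atkinLehner N * (γ : Matrix (Fin 2) (Fin 2) ℤ).map (Int.cast : ℤ → ℚ)) *ᵥ v ≠ 0),
        Projectivization.mk ℚ v hv = p₁ → Projectivization.mk ℚ _ hw = p₂ := by
  obtain ⟨a₁, b₁, a₂, b₂, hcop, rfl, rfl, rfl⟩ := exists_coprime_factorization_of_discr_eq_sq hdisc
  have hδ : (a₁ * b₂ - b₁ * a₂) ^ 2 = d ^ 2 := by linear_combination hdisc
  have hδ0 : a₁ * b₂ - b₁ * a₂ ≠ 0 := fun h =>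
    hd (pow_eq_zero_iff two_ne_zero |>.1 (by rw [← hδ, h]; ring))
  have hδN : IsCoprime (a₁ * b₂ - b₁ * a₂) N :=
    (IsCoprime.pow_left_iff two_pos).1 (hδ ▸ hdN.pow_left)
  have h₁ : a₁ ≠ 0 ∨ b₁ ≠ 0 := by by_contra! h; simp [h] at hδ0
  have h₂ : a₂ ≠ 0 ∨ b₂ ≠ 0 := by by_contra! h; simp [h] at hδ0
  have hu₁ : ![-(b₁ : ℚ), a₁] ≠ 0 := by contrapose! h₁; simpa [and_comm] using h₁
  have hu₂ : ![-(b₂ : ℚ), a₂] ≠ 0 := by contrapose! h₂; simpa [and_comm] using h₂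
  refine ⟨Projectivization.mk ℚ _ hu₁, Projectivization.mk ℚ _ hu₂, ?_, fun p => ?_, ?_⟩
  · rw [Ne, ← Projectivization.linearForm_eq_zero_iff_mk_eq hu₂ hu₁]
    simp only [cons_val_zero, cons_val_one]
    intro h
    exact hδ0 (by exact_mod_cast (by linear_combination h : (a₁ : ℚ) * b₂ - b₁ * a₂ = 0))
  · rw [QFval_mul, mul_eq_zero, Projectivization.linearForm_eq_zero_iff_mk_eq hu₁ p.rep_nonzero,
      Projectivization.linearForm_eq_zero_iff_mk_eq hu₂ p.rep_nonzero, Projectivization.mk_rep]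
  · obtain ⟨γ, hγ, c, hc⟩ := exists_mem_Gamma0_atkinLehner_mul_mulVec_eq_smul hN hcop hδN ha h₂
    exact ⟨γ, hγ, fun v hv hw =>
      Projectivization.mk_mulVec_eq_of_mulVec_eq_smul hc hu₁ hu₂ hv hw⟩

theorem endpoints_related_by_W6_general (d : ℤ) (hd6 : Int.gcd d 6 = 1)
    (a b c : ℤ) (hdisc : b ^ 2 - 4 * a * c = d ^ 2) (ha : 6 ∣ a) :
    ∃ p₁ p₂ : Projectivization ℚ (Fin 2 → ℚ), p₁ ≠ p₂ ∧
      (∀ p : Projectivization ℚ (Fin 2 → ℚ), QFval a b c p.rep = 0 ↔ p = p₁ ∨ p = p₂) ∧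
      ∃ γ : Matrix.SpecialLinearGroup (Fin 2) ℤ, 6 ∣ γ.1 1 0 ∧
        ∀ (v : Fin 2 → ℚ) (hv : v ≠ 0)
          (hw : (W6 * (γ.1.map (Int.cast : ℤ → ℚ))).mulVec v ≠ 0),
          Projectivization.mk ℚ v hv = p₁ →
            Projectivization.mk ℚ ((W6 * (γ.1.map (Int.cast : ℤ → ℚ))).mulVec v) hw = p₂ := by
  have hd : d ≠ 0 := by rintro rfl; simp at hd6
  have h6 : Squarefree 6 :=
    (Nat.squarefree_mul (by norm_num)).2 ⟨Nat.prime_two.squarefree, Nat.prime_three.squarefree⟩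
  have hW : atkinLehner 6 = W6 := by simp [atkinLehner, W6]
  obtain ⟨p₁, p₂, hne, hroots, γ, hγ, hγp⟩ := exists_roots_related_by_atkinLehner h6 hd
    (Int.isCoprime_iff_gcd_eq_one.2 hd6) hdisc ha
  refine ⟨p₁, p₂, hne, hroots, γ, ?_, hW ▸ hγp⟩
  exact (ZMod.intCast_zmod_eq_zero_iff_dvd _ 6).1 (Gamma0_mem.1 hγ)

theorem endpoints_related_by_W6 (d : ℤ) (hd : d ≠ 0) (hd6 : Int.gcd d 6 = 1)
    (a b c : ℤ) (hdisc : b ^ 2 - 4 * a * c = d ^ 2) (ha : 6 ∣ a) :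
    ∃ p₁ p₂ : Projectivization ℚ (Fin 2 → ℚ), p₁ ≠ p₂ ∧
      (∀ p : Projectivization ℚ (Fin 2 → ℚ), QFval a b c p.rep = 0 ↔ p = p₁ ∨ p = p₂) ∧
      ∃ γ : Matrix.SpecialLinearGroup (Fin 2) ℤ, 6 ∣ γ.1 1 0 ∧
        ∀ (v : Fin 2 → ℚ) (hv : v ≠ 0)
          (hw : (W6 * (γ.1.map (Int.cast : ℤ → ℚ))).mulVec v ≠ 0),
          Projectivization.mk ℚ v hv = p₁ →
            Projectivization.mk ℚ ((W6 * (γ.1.map (Int.cast : ℤ → ℚ))).mulVec v) hw = p₂ :=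
  endpoints_related_by_W6_general d hd6 a b c hdisc ha
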